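/- arXiv:1711.02880 — 4 statements merged into one kernel-verified Lean document; each statement's English description precedes it below -/
import Mathlib

section
/- Let x ∈ ℕ^I and n = ∑_{i∈I} x_i. Then Φ(x) = ∑_c ∏_{p=1}^{n} 1 / M(⋃_{q=1}^{p} 𝒦_{c_q}), where the sum ranges over all sequences c = (c_1, …, c_n) ∈ I^n in which each class i ∈ I occurs exactly x_i times. (Consequently, the aggregate stationary measure of the FCFS order-independent queue model coincides with the stationary measure π(x) = π(0) Φ(x) λ^x of balanced fairness.) -/
open scoped BigOperators

/-- The balance function of balanced fairness: `Φ(0) = 1` and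
`Φ(x) = (∑_{i : x_i > 0} Φ(x - e_i)) / M(⋃_{i : x_i > 0} 𝒦_i)`. -/
noncomputable def Phi {I K : Type} [Fintype I] [DecidableEq I] [DecidableEq K]
    (μ : K → ℝ) (Ka : I → Finset K) (x : I → ℕ) : ℝ :=
  if x = fun _ => 0 then 1
  else (∑ i ∈ (Finset.univ.filter (fun i => 0 < x i)).attach,
      Phi μ Ka (Function.update x i.1 (x i.1 - 1))) /
    (∑ k ∈ (Finset.univ.filter (fun i => 0 < x i)).biUnion Ka, μ k)
termination_by ∑ i, x i
decreasing_by
  have hi := i.2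
  simp only [Finset.mem_filter] at hi
  apply Finset.sum_lt_sum
  · intro j _
    rcases eq_or_ne j i.1 with rfl | h
    · simp [Function.update_self]
    · rw [Function.update_of_ne h]
  · exact ⟨i.1, Finset.mem_univ i.1, by simp [Function.update_self]; omega⟩

/-!
Classify the sequences counted by `x` according to their last class `i`, which must have
`x i > 0`. Dropping that last entry leaves exactly the sequences counted by `x - e_i`, and the
prefixes other than the full one are unchanged. The full prefix contains every class present in
`x`, so its server set is `⋃_{x_i > 0} 𝒦_i` whatever the sequence: its factor is the common
denominator in the recursion for `Φ`, and induction on `n` concludes.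
-/

open Finset

lemma sum_update_pred_of_pos {I : Type} [Fintype I] [DecidableEq I] {x : I → ℕ} {i : I}
    (hi : 0 < x i) : ∑ j, Function.update x i (x i - 1) j = ∑ j, x j - 1 := by
  rw [sum_update_of_mem (mem_univ i), ← add_sum_erase _ _ (mem_univ i), sdiff_singleton_eq_erase]
  omega

lemma Phi_of_ne_zero {I K : Type} [Fintype I] [DecidableEq I] [DecidableEq K] (μ : K → ℝ)
    (Ka : I → Finset K) {x : I → ℕ} (hx : x ≠ 0) :
    Phi μ Ka x = (∑ i ∈ univ.filter (0 < x ·), Phi μ Ka (Function.update x i (x i - 1))) /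
      ∑ k ∈ (univ.filter (0 < x ·)).biUnion Ka, μ k := by
  rw [Phi, if_neg (show ¬x = fun _ => 0 from hx),
    sum_attach _ fun i => Phi μ Ka (Function.update x i (x i - 1))]

lemma Fin.card_filter_snoc_eq {α : Type} [DecidableEq α] {m : ℕ} (c : Fin m → α) (a b : α) :
    #{p | Fin.snoc (α := fun _ => α) c a p = b} = #{p | c p = b} + if a = b then 1 else 0 := by
  simp only [card_filter, Fin.sum_univ_castSucc, Fin.snoc_castSucc, Fin.snoc_last]

namespace BalanceFunction

section Sequences

variable {I : Type} [Fintype I] [DecidableEq I]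

def sequencesWithCounts (n : ℕ) (x : I → ℕ) : Finset (Fin n → I) :=
  univ.filter fun c => ∀ i, #{p | c p = i} = x i

lemma snoc_mem_sequencesWithCounts_iff {m : ℕ} {x : I → ℕ} (c : Fin m → I) (i : I) :
    Fin.snoc c i ∈ sequencesWithCounts (m + 1) x ↔
      0 < x i ∧ c ∈ sequencesWithCounts m (Function.update x i (x i - 1)) := by
  simp only [sequencesWithCounts, mem_filter, mem_univ, true_and, Fin.card_filter_snoc_eq]
  constructor
  · intro h
    refine ⟨by have := h i; simp only [if_true] at this; omega, fun j => ?_⟩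
    rcases eq_or_ne j i with rfl | hji
    · simpa using (Nat.eq_sub_of_add_eq (by simpa using h j))
    · simpa [hji, Ne.symm hji] using h j
  · rintro ⟨hi, h⟩ j
    rcases eq_or_ne j i with rfl | hji
    · simp only [h j, Function.update_self, if_true]
      omega
    · simpa [hji, Ne.symm hji] using h j

lemma sum_sequencesWithCounts_succ {m : ℕ} (x : I → ℕ) (f : (Fin (m + 1) → I) → ℝ) :
    ∑ c ∈ sequencesWithCounts (m + 1) x, f c =
      ∑ i ∈ univ.filter (0 < x ·), ∑ c ∈ sequencesWithCounts m (Function.update x i (x i - 1)),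
        f (Fin.snoc c i) := by
  calc ∑ c ∈ sequencesWithCounts (m + 1) x, f c
      = ∑ c, if c ∈ sequencesWithCounts (m + 1) x then f c else 0 := by
        rw [sum_ite_mem, univ_inter]
    _ = ∑ ic : I × (Fin m → I), if Fin.snoc ic.2 ic.1 ∈ sequencesWithCounts (m + 1) x
          then f (Fin.snoc ic.2 ic.1) else 0 :=
        ((Fin.snocEquiv fun _ => I).sum_comp _).symm
    _ = ∑ i, if 0 < x i then
          ∑ c ∈ sequencesWithCounts m (Function.update x i (x i - 1)), f (Fin.snoc c i)
          else 0 := by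
      rw [Fintype.sum_prod_type]
      refine sum_congr rfl fun i _ => ?_
      simp only [snoc_mem_sequencesWithCounts_iff]
      split_ifs with hi
      · simp [hi, sum_ite_mem]
      · simp [hi]
    _ = _ := (sum_filter _ _).symm

lemma image_eq_filter_pos {n : ℕ} {x : I → ℕ} {c : Fin n → I}
    (hc : c ∈ sequencesWithCounts n x) : univ.image c = univ.filter (0 < x ·) := by
  ext i
  simp only [sequencesWithCounts, mem_filter, mem_univ, true_and] at hc
  simp [← hc i, card_pos, Finset.Nonempty, eq_comm]

end Sequences

section Weights

variable {I K : Type} [DecidableEq K]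

def prefixServers (Ka : I → Finset K) {n : ℕ} (c : Fin n → I) (p : Fin n) : Finset K :=
  (univ.filter (· ≤ p)).biUnion fun q => Ka (c q)

noncomputable def sequenceWeight (μ : K → ℝ) (Ka : I → Finset K) {n : ℕ} (c : Fin n → I) : ℝ :=
  ∏ p, 1 / ∑ k ∈ prefixServers Ka c p, μ k

lemma prefixServers_last [DecidableEq I] (Ka : I → Finset K) {m : ℕ} (c : Fin (m + 1) → I) :
    prefixServers Ka c (Fin.last m) = (univ.image c).biUnion Ka := by
  rw [image_biUnion]
  simp [prefixServers, Fin.le_last]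

lemma prefixServers_snoc_castSucc (Ka : I → Finset K) {m : ℕ} (c : Fin m → I) (i : I)
    (p : Fin m) :
    prefixServers Ka (Fin.snoc c i) p.castSucc = prefixServers Ka c p := by
  have filter_le_eq_Iic {n : ℕ} (r : Fin n) : univ.filter (· ≤ r) = Iic r := by ext; simp
  simp [prefixServers, filter_le_eq_Iic, ← Fin.finsetImage_castSucc_Iic, image_biUnion]

lemma sequenceWeight_snoc (μ : K → ℝ) (Ka : I → Finset K) {m : ℕ} (c : Fin m → I) (i : I) :
    sequenceWeight μ Ka (Fin.snoc c i) = sequenceWeight μ Ka c /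
      ∑ k ∈ prefixServers Ka (Fin.snoc c i) (Fin.last m), μ k := by
  simp only [sequenceWeight, Fin.prod_univ_castSucc, prefixServers_snoc_castSucc, mul_one_div]

end Weights

end BalanceFunction

open BalanceFunction

theorem balance_function_eq_sum_over_sequences_general
    {I K : Type} [Fintype I] [DecidableEq I] [DecidableEq K]
    (μ : K → ℝ) (Ka : I → Finset K)
    (x : I → ℕ) (n : ℕ) (hn : n = ∑ i, x i) :
    Phi μ Ka x =
      ∑ c ∈ Finset.univ.filter
          (fun c : Fin n → I =>
            ∀ i, (Finset.univ.filter (fun p => c p = i)).card = x i),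
        ∏ p : Fin n,
          1 / ∑ k ∈ (Finset.univ.filter (fun q : Fin n => q ≤ p)).biUnion
              (fun q => Ka (c q)), μ k := by
  change Phi μ Ka x = ∑ c ∈ sequencesWithCounts n x, sequenceWeight μ Ka c
  induction n generalizing x with
  | zero =>
    obtain rfl : x = fun _ => 0 := funext fun i => sum_eq_zero_iff.mp hn.symm i (mem_univ i)
    rw [Phi, if_pos rfl]
    simp [sequencesWithCounts, sequenceWeight]
  | succ m ih =>
    have hx : x ≠ 0 := by rintro rfl; simp at hn
    rw [Phi_of_ne_zero μ Ka hx, sum_sequencesWithCounts_succ, sum_div]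
    refine sum_congr rfl fun i hi => ?_
    have hi : 0 < x i := (mem_filter.mp hi).2
    rw [ih _ (by rw [sum_update_pred_of_pos hi]; omega), sum_div]
    refine sum_congr rfl fun c hc => ?_
    have hc' := (snoc_mem_sequencesWithCounts_iff c i).mpr ⟨hi, hc⟩
    rw [sequenceWeight_snoc, prefixServers_last, image_eq_filter_pos hc']

/-- For `x ∈ ℕ^I` and `n = ∑_i x_i`,
`Φ(x) = ∑_c ∏_{p=1}^n 1 / M(⋃_{q=1}^p 𝒦_{c_q})`, the sum ranging over all sequences
`c = (c_1, …, c_n) ∈ I^n` in which each class `i` occurs exactly `x_i` times. -/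
theorem balance_function_eq_sum_over_sequences
    {I K : Type} [Fintype I] [DecidableEq I] [Nonempty I]
    [Fintype K] [DecidableEq K] [Nonempty K]
    (μ : K → ℝ) (hμ : ∀ k, 0 < μ k)
    (Ka : I → Finset K) (hKa : ∀ i, (Ka i).Nonempty) (hcov : ∀ k, ∃ i, k ∈ Ka i)
    (x : I → ℕ) (n : ℕ) (hn : n = ∑ i, x i) :
    Phi μ Ka x =
      ∑ c ∈ Finset.univ.filter
          (fun c : Fin n → I =>
            ∀ i, (Finset.univ.filter (fun p => c p = i)).card = x i),
        ∏ p : Fin n,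
          1 / ∑ k ∈ (Finset.univ.filter (fun q : Fin n => q ≤ p)).biUnion
              (fun q => Ka (c q)), μ k :=
  balance_function_eq_sum_over_sequences_general μ Ka x n hn
end

section
/- Let x ∈ ℕ^I with n = ∑_{j∈I} x_j ≥ 1, and let i ∈ I with x_i > 0. Then Φ(x − e_i) = ∑_c ( ∏_{p=1}^{n} 1 / M(⋃_{q=1}^{p} 𝒦_{c_q}) ) · ∑_{p : c_p = i} ( M(⋃_{q=1}^{p} 𝒦_{c_q}) − M(⋃_{q=1}^{p−1} 𝒦_{c_q}) ), where the outer sum ranges over all sequences c = (c_1, …, c_n) ∈ I^n in which each class j ∈ I occurs exactly x_j times, and with the convention M(∅) = 0. (This states that the balanced-fairness service rate φ_i(x) = Φ(x−e_i)/Φ(x) is the mean service rate of class i under sequential FCFS scheduling, conditioned on the per-class job counts.) -/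
/-!
Write `M(x)` for the capacity of the servers of the classes present in `x`, and for a queue
`c ∈ I^n` let `W(c) = ∏_p 1 / M(⋃_{q ≤ p} 𝒦_{c_q})`. Splitting off the last job of the queue shows
that `∑_c W(c)`, over the queues with class counts `x`, obeys the recursion defining `Φ(x)`, so it
equals `Φ(x)`. Splitting off the last job of `R(x) = ∑_c W(c) r_i(c)`, where `r_i(c)` is the FCFS
rate of class `i`, gives `(∑_j R(x - e_j) + (M(x) - M(x - e_i)) Φ(x - e_i)) / M(x)`: the last job
is served at rate `M(x) - M(x - e_i)` if it has class `i`. By induction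
`R(x - e_j) = Φ(x - e_j - e_i)`, and the recursion of `Φ` at `x - e_i` turns their sum into
`M(x - e_i) Φ(x - e_i)`, so `R(x) = Φ(x - e_i)`.
-/

open scoped BigOperators

open Finset

namespace BalancedFairness

local notation:65 x:65 " -ₑ " j:max => Function.update x j (x j - 1)

section Counts

variable {I : Type} [Fintype I]

def active (x : I → ℕ) : Finset I := {j | 0 < x j}

theorem mem_active {x : I → ℕ} {j : I} : j ∈ active x ↔ 0 < x j := by
  simp [active]

theorem active_nonempty {x : I → ℕ} (hx : x ≠ 0) : (active x).Nonempty := by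
  obtain ⟨j, hj⟩ := Function.ne_iff.mp hx
  exact ⟨j, mem_active.mpr (Nat.pos_of_ne_zero hj)⟩

variable [DecidableEq I]

theorem active_eq_insert {x : I → ℕ} {j : I} (hj : 0 < x j) :
    active x = insert j (active (x -ₑ j)) := by
  ext k
  rcases eq_or_ne k j with rfl | h
  · simp [mem_active, hj]
  · simp [mem_active, h]

theorem sum_update_pred {x : I → ℕ} {j : I} (hj : 0 < x j) :
    ∑ l, (x -ₑ j) l = ∑ l, x l - 1 := by
  rw [sum_update_of_mem (mem_univ j), ← add_sum_erase univ x (mem_univ j), sdiff_singleton_eq_erase]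
  omega

omit [Fintype I] in
theorem update_pred_comm (x : I → ℕ) (i j : I) : (x -ₑ j) -ₑ i = (x -ₑ i) -ₑ j := by
  rcases eq_or_ne i j with rfl | h
  · rfl
  · simp only [Function.update_of_ne h, Function.update_of_ne h.symm]
    exact Function.update_comm h.symm _ _ x

end Counts

section Arrangements

variable {I : Type} [Fintype I] [DecidableEq I]

/-- FCFS queues, listed from the head, with class counts `x`. -/
def arrangements (x : I → ℕ) (n : ℕ) : Finset (Fin n → I) :=
  {c | ∀ j, #{p | c p = j} = x j}

theorem mem_arrangements {x : I → ℕ} {n : ℕ} {c : Fin n → I} :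
    c ∈ arrangements x n ↔ ∀ j, #{p | c p = j} = x j := by
  simp [arrangements]

theorem arrangements_zero : arrangements (0 : I → ℕ) 0 = univ :=
  eq_univ_of_forall fun _ => mem_arrangements.mpr fun _ => by simp

omit [Fintype I] in
theorem card_filter_snoc_eq {n : ℕ} (c : Fin n → I) (j k : I) :
    #{p | (Fin.snoc c j : Fin (n + 1) → I) p = k} = #{p | c p = k} + if j = k then 1 else 0 := by
  rw [card_filter, card_filter, Fin.sum_univ_castSucc]
  simp [Fin.snoc_castSucc, Fin.snoc_last]

theorem snoc_mem_arrangements_iff {x : I → ℕ} {n : ℕ} {c : Fin n → I} {j : I} :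
    (Fin.snoc c j : Fin (n + 1) → I) ∈ arrangements x (n + 1) ↔
      0 < x j ∧ c ∈ arrangements (x -ₑ j) n := by
  simp only [mem_arrangements, card_filter_snoc_eq]
  constructor
  · intro hc
    have hj : 0 < x j := by simp only [← hc j, if_true]; omega
    refine ⟨hj, fun k => ?_⟩
    rcases eq_or_ne j k with rfl | h
    · have := hc j
      simp only [if_true] at this
      simp only [Function.update_self]
      omega
    · simpa [h, Function.update_of_ne (Ne.symm h)] using hc k
  · rintro ⟨hj, hc⟩ k
    rw [hc k]
    rcases eq_or_ne j k with rfl | h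
    · simp only [Function.update_self, if_true]
      omega
    · simp [h, Function.update_of_ne (Ne.symm h)]

theorem sum_arrangements_succ {M : Type*} [AddCommMonoid M] (x : I → ℕ) (n : ℕ)
    (f : (Fin (n + 1) → I) → M) :
    ∑ c ∈ arrangements x (n + 1), f c =
      ∑ j ∈ active x, ∑ c ∈ arrangements (x -ₑ j) n, f (Fin.snoc c j) := by
  rw [sum_sigma']
  refine sum_bij' (fun c _ => ⟨c (Fin.last n), Fin.init c⟩) (fun p _ => Fin.snoc p.2 p.1)
    ?_ ?_ ?_ ?_ ?_
  · intro c hc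
    rw [← Fin.snoc_init_self c, snoc_mem_arrangements_iff] at hc
    exact mem_sigma.mpr ⟨mem_active.mpr hc.1, hc.2⟩
  · rintro ⟨j, c⟩ hc
    obtain ⟨hj, hc⟩ := mem_sigma.mp hc
    exact snoc_mem_arrangements_iff.mpr ⟨mem_active.mp hj, hc⟩
  · intro c _
    exact Fin.snoc_init_self c
  · rintro ⟨j, c⟩ _
    simp [Fin.snoc_last, Fin.init_snoc]
  · intro c _
    rw [Fin.snoc_init_self]

theorem image_eq_active {x : I → ℕ} {n : ℕ} {c : Fin n → I} (hc : c ∈ arrangements x n) :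
    univ.image c = active x := by
  ext j
  rw [mem_active, ← mem_arrangements.mp hc j, card_pos]
  simp [Finset.Nonempty]

end Arrangements

section Servers

variable {I K : Type} [DecidableEq K] (Ka : I → Finset K)

def servers {n : ℕ} (c : Fin n → I) (s : Finset (Fin n)) : Finset K :=
  s.biUnion fun q => Ka (c q)

theorem servers_snoc_map_castSucc {n : ℕ} (c : Fin n → I) (j : I) (s : Finset (Fin n)) :
    servers Ka (Fin.snoc c j : Fin (n + 1) → I) (s.map Fin.castSuccEmb) = servers Ka c s := by
  simp only [servers, map_eq_image, image_biUnion]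
  exact biUnion_congr rfl fun q _ => by simp [Fin.snoc_castSucc]

theorem servers_snoc_Iic_castSucc {n : ℕ} (c : Fin n → I) (j : I) (p : Fin n) :
    servers Ka (Fin.snoc c j : Fin (n + 1) → I) (Iic p.castSucc) = servers Ka c (Iic p) := by
  rw [← Fin.map_castSuccEmb_Iic, servers_snoc_map_castSucc]

theorem servers_snoc_Iio_castSucc {n : ℕ} (c : Fin n → I) (j : I) (p : Fin n) :
    servers Ka (Fin.snoc c j : Fin (n + 1) → I) (Iio p.castSucc) = servers Ka c (Iio p) := by
  rw [← Fin.map_castSuccEmb_Iio, servers_snoc_map_castSucc]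

theorem servers_snoc_Iio_last {n : ℕ} (c : Fin n → I) (j : I) :
    servers Ka (Fin.snoc c j : Fin (n + 1) → I) (Iio (Fin.last n)) = servers Ka c univ := by
  rw [Fin.Iio_last_eq_map, servers_snoc_map_castSucc]

theorem servers_snoc_Iic_last {n : ℕ} (c : Fin n → I) (j : I) :
    servers Ka (Fin.snoc c j : Fin (n + 1) → I) (Iic (Fin.last n)) = Ka j ∪ servers Ka c univ := by
  rw [← Iio_insert, servers, biUnion_insert, Fin.snoc_last, ← servers, servers_snoc_Iio_last]

theorem servers_univ_eq [Fintype I] [DecidableEq I] {x : I → ℕ} {n : ℕ} {c : Fin n → I}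
    (hc : c ∈ arrangements x n) : servers Ka c univ = (active x).biUnion Ka := by
  rw [servers, ← image_eq_active hc, image_biUnion]

end Servers

section Rates

variable {I K : Type} [Fintype I] [DecidableEq I] [DecidableEq K] (μ : K → ℝ) (Ka : I → Finset K)

noncomputable def capacity (L : Finset K) : ℝ := ∑ k ∈ L, μ k

/-- The total service rate `M(⋃_{j : x_j > 0} 𝒦_j)` in state `x`, the denominator of `Phi`. -/
noncomputable def stateCapacity (x : I → ℕ) : ℝ := capacity μ ((active x).biUnion Ka)

omit [DecidableEq I] in
theorem stateCapacity_pos (hμ : ∀ k, 0 < μ k) (hKa : ∀ i, (Ka i).Nonempty) {x : I → ℕ}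
    (hx : x ≠ 0) : 0 < stateCapacity μ Ka x := by
  obtain ⟨j, hj⟩ := active_nonempty hx
  obtain ⟨k, hk⟩ := hKa j
  exact sum_pos (fun k _ => hμ k) ⟨k, mem_biUnion.mpr ⟨j, hj, hk⟩⟩

omit [DecidableEq I] in
theorem stateCapacity_zero : stateCapacity μ Ka (0 : I → ℕ) = 0 := by
  simp [stateCapacity, capacity, active]

/-- The stationary weight of the FCFS queue `c`: the queue is built up at the back, and while it
holds its first `p + 1` jobs it is served at total rate `M(⋃_{q ≤ p} 𝒦_{c_q})`. -/
noncomputable def weight {n : ℕ} (c : Fin n → I) : ℝ :=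
  ∏ p, 1 / capacity μ (servers Ka c (Iic p))

/-- The service rate of class `i` under FCFS: each job is served by the servers that are
assigned to it and not to any job ahead of it. -/
noncomputable def fcfsRate (i : I) {n : ℕ} (c : Fin n → I) : ℝ :=
  ∑ p with c p = i, (capacity μ (servers Ka c (Iic p)) - capacity μ (servers Ka c (Iio p)))

noncomputable def weightSum (x : I → ℕ) (n : ℕ) : ℝ :=
  ∑ c ∈ arrangements x n, weight μ Ka c

noncomputable def meanRate (x : I → ℕ) (n : ℕ) (i : I) : ℝ :=
  ∑ c ∈ arrangements x n, weight μ Ka c * fcfsRate μ Ka i c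

variable {μ Ka}

theorem weight_snoc {x : I → ℕ} {n : ℕ} {j : I} (hj : 0 < x j) {c : Fin n → I}
    (hc : c ∈ arrangements (x -ₑ j) n) :
    weight μ Ka (Fin.snoc c j : Fin (n + 1) → I) = weight μ Ka c / stateCapacity μ Ka x := by
  rw [weight, Fin.prod_univ_castSucc, servers_snoc_Iic_last, servers_univ_eq Ka hc,
    stateCapacity, active_eq_insert hj, biUnion_insert, mul_one_div]
  simp only [servers_snoc_Iic_castSucc, weight]

theorem fcfsRate_snoc {x : I → ℕ} {n : ℕ} {j : I} (hj : 0 < x j) (i : I) {c : Fin n → I}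
    (hc : c ∈ arrangements (x -ₑ j) n) :
    fcfsRate μ Ka i (Fin.snoc c j : Fin (n + 1) → I) = fcfsRate μ Ka i c +
      if j = i then stateCapacity μ Ka x - stateCapacity μ Ka (x -ₑ j) else 0 := by
  rw [fcfsRate, sum_filter, Fin.sum_univ_castSucc, Fin.snoc_last, servers_snoc_Iic_last,
    servers_snoc_Iio_last, servers_univ_eq Ka hc, stateCapacity, stateCapacity,
    active_eq_insert hj, biUnion_insert, fcfsRate, sum_filter]
  simp only [Fin.snoc_castSucc, servers_snoc_Iic_castSucc, servers_snoc_Iio_castSucc]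

omit [Fintype I] in
theorem fcfsRate_eq_zero {n : ℕ} {c : Fin n → I} {i : I} (h : ∀ p, c p ≠ i) :
    fcfsRate μ Ka i c = 0 :=
  sum_eq_zero fun p hp => absurd (mem_filter.mp hp).2 (h p)

theorem meanRate_of_eq_zero {x : I → ℕ} {n : ℕ} {i : I} (hx : x i = 0) :
    meanRate μ Ka x n i = 0 := by
  refine sum_eq_zero fun c hc => ?_
  have hcount : #{p | c p = i} = 0 := (mem_arrangements.mp hc i).trans hx
  rw [fcfsRate_eq_zero fun p => filter_eq_empty_iff.mp (card_eq_zero.mp hcount) (mem_univ p),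
    mul_zero]

theorem sum_weight_mul_succ (x : I → ℕ) (n : ℕ) (f : (Fin (n + 1) → I) → ℝ) :
    ∑ c ∈ arrangements x (n + 1), weight μ Ka c * f c =
      (∑ j ∈ active x, ∑ c ∈ arrangements (x -ₑ j) n, weight μ Ka c * f (Fin.snoc c j)) /
        stateCapacity μ Ka x := by
  rw [sum_arrangements_succ, sum_div]
  refine sum_congr rfl fun j hj => ?_
  rw [sum_div]
  refine sum_congr rfl fun c hc => ?_
  rw [weight_snoc (mem_active.mp hj) hc, div_mul_eq_mul_div]

theorem weightSum_succ (x : I → ℕ) (n : ℕ) :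
    weightSum μ Ka x (n + 1) =
      (∑ j ∈ active x, weightSum μ Ka (x -ₑ j) n) / stateCapacity μ Ka x := by
  simpa [weightSum] using sum_weight_mul_succ (μ := μ) (Ka := Ka) x n fun _ => 1

theorem weightSum_zero : weightSum μ Ka (0 : I → ℕ) 0 = 1 := by
  simp [weightSum, arrangements_zero, weight]

theorem Phi_eq_weightSum (n : ℕ) :
    ∀ x : I → ℕ, ∑ j, x j = n → Phi μ Ka x = weightSum μ Ka x n := by
  induction n with
  | zero =>
    intro x hx
    have hx0 : x = fun _ => 0 := funext fun j => sum_eq_zero_iff.mp hx j (mem_univ j)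
    rw [Phi, if_pos hx0, hx0]
    exact weightSum_zero.symm
  | succ n ih =>
    intro x hx
    have hx0 : x ≠ fun _ => 0 := by rintro rfl; simp at hx
    rw [Phi, if_neg hx0, weightSum_succ, ← sum_attach (active x)]
    congr 1
    refine sum_congr rfl fun j _ => ih _ ?_
    rw [sum_update_pred (mem_active.mp j.2), hx, Nat.add_sub_cancel]

theorem meanRate_succ {x : I → ℕ} {n : ℕ} {i : I} (hi : 0 < x i) :
    meanRate μ Ka x (n + 1) i =
      (∑ j ∈ active x, meanRate μ Ka (x -ₑ j) n i +
          (stateCapacity μ Ka x - stateCapacity μ Ka (x -ₑ i)) * weightSum μ Ka (x -ₑ i) n) /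
        stateCapacity μ Ka x := by
  rw [meanRate, sum_weight_mul_succ]
  congr 1
  have hsplit : ∀ j ∈ active x, ∑ c ∈ arrangements (x -ₑ j) n,
      weight μ Ka c * fcfsRate μ Ka i (Fin.snoc c j) =
        meanRate μ Ka (x -ₑ j) n i +
          (if j = i then stateCapacity μ Ka x - stateCapacity μ Ka (x -ₑ j) else 0) *
            weightSum μ Ka (x -ₑ j) n := by
    intro j hj
    rw [meanRate, weightSum, mul_sum, ← sum_add_distrib]
    refine sum_congr rfl fun c hc => ?_
    rw [fcfsRate_snoc (mem_active.mp hj) i hc]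
    ring
  simp only [sum_congr rfl hsplit, sum_add_distrib, ite_mul, zero_mul, sum_ite_eq' (active x) i,
    if_pos (mem_active.mpr hi)]

variable (μ Ka) in
theorem meanRate_succ_of_sum_meanRate (hμ : ∀ k, 0 < μ k) (hKa : ∀ i, (Ka i).Nonempty)
    {x : I → ℕ} {m : ℕ} {i : I} (hx : ∑ j, x j = m + 1) (hi : 0 < x i)
    (hsum : ∑ j ∈ active x, meanRate μ Ka (x -ₑ j) m i =
      stateCapacity μ Ka (x -ₑ i) * weightSum μ Ka (x -ₑ i) m) :
    meanRate μ Ka x (m + 1) i = weightSum μ Ka (x -ₑ i) m := by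
  have hx0 : x ≠ 0 := by rintro rfl; simp at hx
  rw [meanRate_succ hi, hsum, ← add_mul, add_sub_cancel,
    mul_div_cancel_left₀ _ (stateCapacity_pos μ Ka hμ hKa hx0).ne']

theorem meanRate_length_zero (x : I → ℕ) (i : I) : meanRate μ Ka x 0 i = 0 :=
  sum_eq_zero fun _ _ => by rw [fcfsRate_eq_zero fun p => p.elim0, mul_zero]

variable (μ Ka) in
/-- By `ih` the left side is the recursion of the balance function at `x - e_i`. -/
theorem sum_meanRate_pred_eq (hμ : ∀ k, 0 < μ k) (hKa : ∀ i, (Ka i).Nonempty) {m : ℕ}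
    (ih : ∀ {x : I → ℕ} {i : I}, ∑ j, x j = m + 1 → 0 < x i →
      meanRate μ Ka x (m + 1) i = weightSum μ Ka (x -ₑ i) m)
    {x : I → ℕ} {i : I} (hx : ∑ j, x j = m + 2) (hi : 0 < x i) :
    ∑ j ∈ active x, meanRate μ Ka (x -ₑ j) (m + 1) i =
      stateCapacity μ Ka (x -ₑ i) * weightSum μ Ka (x -ₑ i) (m + 1) := by
  have hy : ∑ j, (x -ₑ i) j = m + 1 := by rw [sum_update_pred hi, hx]; rfl
  have hy0 : x -ₑ i ≠ 0 := by rintro h; simp [h] at hy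
  have hsub : active (x -ₑ i) ⊆ active x := (active_eq_insert hi).symm ▸ subset_insert i _
  rw [weightSum_succ, mul_div_cancel₀ _ (stateCapacity_pos μ Ka hμ hKa hy0).ne', ← sum_subset hsub]
  · refine sum_congr rfl fun j hj => ?_
    have hxj : 0 < x j := mem_active.mp (hsub hj)
    have hxji : 0 < (x -ₑ j) i := by
      rcases eq_or_ne j i with rfl | h
      · exact mem_active.mp hj
      · rwa [Function.update_of_ne h.symm]
    rw [ih (by rw [sum_update_pred hxj, hx]; rfl) hxji, update_pred_comm]
  · intro j hj hjy
    obtain rfl : j = i := by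
      by_contra h
      exact hjy (mem_active.mpr (by rwa [Function.update_of_ne h, ← mem_active]))
    exact meanRate_of_eq_zero (Nat.eq_zero_of_not_pos (mem_active.not.mp hjy))

theorem meanRate_succ_eq_weightSum_pred (hμ : ∀ k, 0 < μ k) (hKa : ∀ i, (Ka i).Nonempty)
    (m : ℕ) : ∀ {x : I → ℕ} {i : I}, ∑ j, x j = m + 1 → 0 < x i →
      meanRate μ Ka x (m + 1) i = weightSum μ Ka (x -ₑ i) m := by
  induction m with
  | zero =>
    intro x i hx hi
    have hy : x -ₑ i = 0 := funext fun j =>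
      sum_eq_zero_iff.mp (by rw [sum_update_pred hi, hx]; rfl) j (mem_univ j)
    refine meanRate_succ_of_sum_meanRate μ Ka hμ hKa hx hi ?_
    rw [hy, stateCapacity_zero, zero_mul]
    exact sum_eq_zero fun j _ => meanRate_length_zero _ _
  | succ m ih =>
    intro x i hx hi
    exact meanRate_succ_of_sum_meanRate μ Ka hμ hKa hx hi
      (sum_meanRate_pred_eq μ Ka hμ hKa ih hx hi)

end Rates

end BalancedFairness

theorem balanced_fairness_rate_is_mean_fcfs_rate_general
    {I K : Type} [Fintype I] [DecidableEq I] [DecidableEq K]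
    (μ : K → ℝ) (hμ : ∀ k, 0 < μ k)
    (Ka : I → Finset K) (hKa : ∀ i, (Ka i).Nonempty)
    (x : I → ℕ) (n : ℕ) (hn : n = ∑ j, x j) (hn1 : 1 ≤ n)
    (i : I) (hi : 0 < x i) :
    Phi μ Ka (Function.update x i (x i - 1)) =
      ∑ c ∈ Finset.univ.filter
          (fun c : Fin n → I =>
            ∀ j, (Finset.univ.filter (fun p => c p = j)).card = x j),
        (∏ p : Fin n,
          1 / ∑ k ∈ (Finset.univ.filter (fun q : Fin n => q ≤ p)).biUnion
              (fun q => Ka (c q)), μ k) *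
        ∑ p ∈ Finset.univ.filter (fun p : Fin n => c p = i),
          ((∑ k ∈ (Finset.univ.filter (fun q : Fin n => q ≤ p)).biUnion
              (fun q => Ka (c q)), μ k) -
           (∑ k ∈ (Finset.univ.filter (fun q : Fin n => q < p)).biUnion
              (fun q => Ka (c q)), μ k)) := by
  obtain ⟨m, rfl⟩ : ∃ m, n = m + 1 := ⟨n - 1, by omega⟩
  have hm : ∑ j, Function.update x i (x i - 1) j = m := by
    rw [BalancedFairness.sum_update_pred hi, ← hn, Nat.add_sub_cancel]
  rw [BalancedFairness.Phi_eq_weightSum m _ hm,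
    ← BalancedFairness.meanRate_succ_eq_weightSum_pred hμ hKa m hn.symm hi]
  simp only [Finset.filter_ge_eq_Iic, Finset.filter_gt_eq_Iio]
  rfl

/-- For `x ∈ ℕ^I` with `n = ∑_j x_j ≥ 1` and `i` with `x_i > 0`,
`Φ(x − e_i) = ∑_c (∏_{p=1}^n 1/M(⋃_{q=1}^p 𝒦_{c_q})) · ∑_{p : c_p = i}
(M(⋃_{q=1}^p 𝒦_{c_q}) − M(⋃_{q=1}^{p−1} 𝒦_{c_q}))`, the sum ranging over all sequences
`c ∈ I^n` where each class `j` occurs exactly `x_j` times (with `M(∅) = 0`). -/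
theorem balanced_fairness_rate_is_mean_fcfs_rate
    {I K : Type} [Fintype I] [DecidableEq I] [Nonempty I]
    [Fintype K] [DecidableEq K] [Nonempty K]
    (μ : K → ℝ) (hμ : ∀ k, 0 < μ k)
    (Ka : I → Finset K) (hKa : ∀ i, (Ka i).Nonempty) (hcov : ∀ k, ∃ i, k ∈ Ka i)
    (x : I → ℕ) (n : ℕ) (hn : n = ∑ j, x j) (hn1 : 1 ≤ n)
    (i : I) (hi : 0 < x i) :
    Phi μ Ka (Function.update x i (x i - 1)) =
      ∑ c ∈ Finset.univ.filter
          (fun c : Fin n → I =>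
            ∀ j, (Finset.univ.filter (fun p => c p = j)).card = x j),
        (∏ p : Fin n,
          1 / ∑ k ∈ (Finset.univ.filter (fun q : Fin n => q ≤ p)).biUnion
              (fun q => Ka (c q)), μ k) *
        ∑ p ∈ Finset.univ.filter (fun p : Fin n => c p = i),
          ((∑ k ∈ (Finset.univ.filter (fun q : Fin n => q ≤ p)).biUnion
              (fun q => Ka (c q)), μ k) -
           (∑ k ∈ (Finset.univ.filter (fun q : Fin n => q < p)).biUnion
              (fun q => Ka (c q)), μ k)) :=
  balanced_fairness_rate_is_mean_fcfs_rate_general μ hμ Ka hKa x n hn hn1 i hi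
end

section
/- Fix i ∈ I with λ_i > 0 and suppose there exists ε > 0 such that G(λ⁺) < ∞, where λ⁺ agrees with λ except that its i-th coordinate is λ_i + ε. Then the map t ↦ G(λ with i-th coordinate replaced by t) is differentiable at t = λ_i, the series ∑_{x∈ℕ^I} x_i Φ(x) λ^x converges, and L_i = ψ · λ_i · (d/dt) G(λ with i-th coordinate t) evaluated at t = λ_i. That is, L_i = ψ λ_i ∂(1/ψ)/∂λ_i. -/
/-!
With the other arrival rates fixed, `G` is a power series `t ↦ ∑ₓ cₓ t ^ xᵢ` in the
`i`-th rate `t`. Convergence at `λᵢ + ε` gives absolute convergence there, and since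
`k rᵏ⁻¹ = O(Rᵏ)` for `r < R`, the termwise derivatives are dominated uniformly on `(-r, r)` by
a summable family, so the series may be differentiated term by term at `λᵢ`. Finally
`λᵢ · ∂ₜ(cₓ tˣⁱ) = xᵢ cₓ λᵢˣⁱ`, so `λᵢ G'(λᵢ) = ∑ₓ xᵢ Φ(x) λˣ`.
-/

open scoped BigOperators

theorem natCast_mul_pow_pred_mul {R : Type*} [Semiring R] (k : ℕ) (r : R) :
    (k : R) * r ^ (k - 1) * r = k * r ^ k := by
  cases k <;> simp [pow_succ, mul_assoc]

theorem exists_natCast_mul_pow_pred_le {r R : ℝ} (hr : 0 < r) (hrR : r < R) :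
    ∃ C, ∀ k : ℕ, k * r ^ (k - 1) ≤ C * R ^ k := by
  have hR : 0 < R := hr.trans hrR
  obtain ⟨C, hC⟩ := (tendsto_self_mul_const_pow_of_lt_one (div_pos hr hR).le
    ((div_lt_one hR).2 hrR)).bddAbove_range
  refine ⟨C / r, fun k => ?_⟩
  rw [div_mul_eq_mul_div, le_div_iff₀ hr, natCast_mul_pow_pred_mul]
  calc (k : ℝ) * r ^ k = k * (r / R) ^ k * R ^ k := by
        rw [div_pow, mul_assoc, div_mul_cancel₀ _ (pow_pos hR k).ne']
    _ ≤ C * R ^ k := by gcongr; exact hC ⟨k, rfl⟩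

section PowerSeries

variable {ι : Type*} {c : ι → ℝ} {n : ι → ℕ} {R : ℝ}

theorem summable_mul_pow_of_abs_le (hc : Summable fun x => c x * R ^ n x) {t : ℝ}
    (ht : |t| ≤ R) : Summable fun x => c x * t ^ n x :=
  hc.abs.of_norm_bounded fun x => by
    rw [Real.norm_eq_abs, abs_mul, abs_mul, abs_pow, abs_pow]
    exact mul_le_mul_of_nonneg_left
      (pow_le_pow_left₀ (abs_nonneg t) (ht.trans (le_abs_self R)) _) (abs_nonneg _)

theorem hasDerivAt_tsum_mul_pow (hc : Summable fun x => c x * R ^ n x) {t₀ : ℝ}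
    (ht₀ : |t₀| < R) :
    Summable (fun x => c x * (n x * t₀ ^ (n x - 1))) ∧
      HasDerivAt (fun t => ∑' x, c x * t ^ n x) (∑' x, c x * (n x * t₀ ^ (n x - 1))) t₀ := by
  obtain ⟨r, ht₀r, hrR⟩ := exists_between ht₀
  obtain ⟨C, hC⟩ := exists_natCast_mul_pow_pred_le ((abs_nonneg t₀).trans_lt ht₀r) hrR
  have hR : 0 ≤ R := (abs_nonneg t₀).trans ht₀.le
  have hbound : ∀ x, ∀ t ∈ Set.Ioo (-r) r,
      ‖c x * (n x * t ^ (n x - 1))‖ ≤ C * |c x * R ^ n x| := fun x t ht => by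
    have hpow : (n x : ℝ) * |t| ^ (n x - 1) ≤ n x * r ^ (n x - 1) :=
      mul_le_mul_of_nonneg_left (pow_le_pow_left₀ (abs_nonneg t) (abs_lt.2 ht).le _)
        (Nat.cast_nonneg _)
    calc ‖c x * (n x * t ^ (n x - 1))‖ = |c x| * (n x * |t| ^ (n x - 1)) := by
          rw [Real.norm_eq_abs, abs_mul, abs_mul, abs_pow, Nat.abs_cast]
      _ ≤ |c x| * (C * R ^ n x) := mul_le_mul_of_nonneg_left (hpow.trans (hC _)) (abs_nonneg _)
      _ = C * |c x * R ^ n x| := by rw [abs_mul, abs_pow, abs_of_nonneg hR]; ring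
  have hmem : t₀ ∈ Set.Ioo (-r) r := abs_lt.1 ht₀r
  exact ⟨.of_norm_bounded (hc.abs.mul_left C) fun x => hbound x t₀ hmem,
    hasDerivAt_tsum_of_isPreconnected (hc.abs.mul_left C) isOpen_Ioo isPreconnected_Ioo
      (fun x t _ => (hasDerivAt_pow (n x) t).const_mul (c x)) hbound hmem
      (summable_mul_pow_of_abs_le hc ht₀.le) hmem⟩

end PowerSeries

theorem prod_update_pow {I M : Type*} [Fintype I] [DecidableEq I] [CommMonoid M]
    (f : I → M) (i : I) (t : M) (x : I → ℕ) :
    ∏ j, Function.update f i t j ^ x j = t ^ x i * ∏ j ∈ Finset.univ.erase i, f j ^ x j := by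
  rw [← Finset.mul_prod_erase _ _ (Finset.mem_univ i), Function.update_self]
  congr 1
  exact Finset.prod_congr rfl fun j hj => by
    rw [Function.update_of_ne (Finset.ne_of_mem_erase hj)]

theorem mean_number_of_jobs_eq_derivative_of_normalization_general
    {I K : Type} [Fintype I] [DecidableEq I] [DecidableEq K]
    (μ : K → ℝ) (Ka : I → Finset K) (lam : I → ℝ) (i : I) (hi : 0 < lam i)
    (ε : ℝ) (hε : 0 < ε)
    (hGplus : Summable (fun x : I → ℕ =>
      Phi μ Ka x * ∏ j, (Function.update lam i (lam i + ε)) j ^ x j)) :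
    ∃ D : ℝ,
      HasDerivAt
        (fun t => ∑' x : I → ℕ, Phi μ Ka x * ∏ j, (Function.update lam i t) j ^ x j)
        D (lam i) ∧
      Summable (fun x : I → ℕ => (x i : ℝ) * Phi μ Ka x * ∏ j, lam j ^ x j) ∧
      (∑' x : I → ℕ, Phi μ Ka x * ∏ j, lam j ^ x j)⁻¹ *
          (∑' x : I → ℕ, (x i : ℝ) * Phi μ Ka x * ∏ j, lam j ^ x j) =
        (∑' x : I → ℕ, Phi μ Ka x * ∏ j, lam j ^ x j)⁻¹ * lam i * D := by
  set c : (I → ℕ) → ℝ := fun x => Phi μ Ka x * ∏ j ∈ Finset.univ.erase i, lam j ^ x j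
  have hG : ∀ t, (fun x => Phi μ Ka x * ∏ j, Function.update lam i t j ^ x j) =
      fun x => c x * t ^ x i := fun t => funext fun x => by rw [prod_update_pow]; ring
  have hmean : (fun x : I → ℕ => (x i : ℝ) * Phi μ Ka x * ∏ j, lam j ^ x j) =
      fun x => lam i * (c x * (x i * lam i ^ (x i - 1))) := funext fun x => by
    have hGx := congrFun (hG (lam i)) x
    rw [Function.update_eq_self] at hGx
    rw [mul_assoc, hGx, mul_left_comm, ← natCast_mul_pow_pred_mul]
    ring
  obtain ⟨hsum, hD⟩ := hasDerivAt_tsum_mul_pow (t₀ := lam i) (hG _ ▸ hGplus)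
    (abs_lt.2 ⟨by linarith, by linarith⟩)
  refine ⟨_, by simpa only [hG] using hD, by rw [hmean]; exact hsum.mul_left _, ?_⟩
  rw [hmean, tsum_mul_left]
  ring

/-- If `λ_i > 0` and the normalization series converges at `λ⁺`
(which agrees with `λ` except that its `i`-th coordinate is `λ_i + ε` for some `ε > 0`),
then `t ↦ G(λ with i-th coordinate t)` is differentiable at `t = λ_i`, the series
`∑_x x_i Φ(x) λ^x` converges, and `L_i = ψ λ_i ∂(1/ψ)/∂λ_i`. -/
theorem mean_number_of_jobs_eq_derivative_of_normalization
    {I K : Type} [Fintype I] [DecidableEq I] [Nonempty I]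
    [Fintype K] [DecidableEq K] [Nonempty K]
    (μ : K → ℝ) (hμ : ∀ k, 0 < μ k)
    (Ka : I → Finset K) (hKa : ∀ i, (Ka i).Nonempty) (hcov : ∀ k, ∃ i, k ∈ Ka i)
    (lam : I → ℝ) (hlam : ∀ j, 0 ≤ lam j)
    (i : I) (hi : 0 < lam i)
    (ε : ℝ) (hε : 0 < ε)
    (hGplus : Summable (fun x : I → ℕ =>
      Phi μ Ka x * ∏ j, (Function.update lam i (lam i + ε)) j ^ x j)) :
    ∃ D : ℝ,
      HasDerivAt
        (fun t => ∑' x : I → ℕ, Phi μ Ka x * ∏ j, (Function.update lam i t) j ^ x j)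
        D (lam i) ∧
      Summable (fun x : I → ℕ => (x i : ℝ) * Phi μ Ka x * ∏ j, lam j ^ x j) ∧
      (∑' x : I → ℕ, Phi μ Ka x * ∏ j, lam j ^ x j)⁻¹ *
          (∑' x : I → ℕ, (x i : ℝ) * Phi μ Ka x * ∏ j, lam j ^ x j) =
        (∑' x : I → ℕ, Phi μ Ka x * ∏ j, lam j ^ x j)⁻¹ * lam i * D :=
  mean_number_of_jobs_eq_derivative_of_normalization_general μ Ka lam i hi ε hε hGplus
end

section
/- Suppose G(λ) < ∞. Then the conservation equation ∑_{k∈K} μ_k ψ_k = M(K) − Λ(I) holds, where ψ_k = ψ · ∑_{x : x_i = 0 for all i ∈ I_k} Φ(x) λ^x is the stationary probability that server k is idle. In particular, Λ(I) < M(K). -/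
open scoped BigOperators

/-!
Multiply the balance equation `Φ(x) M(busy(x)) = ∑_{i : x_i > 0} Φ(x - e_i)` by `λ^x` and sum
over all states. On the left, exchanging the sum over servers with the sum over states gives
`∑_k μ_k (G - G_k)`, where `G_k` sums the weights of the states in which server `k` is idle.
On the right, `x ↦ x - e_i` is a bijection from `{x | x_i > 0}` onto `ℕ^I`, so the sum is
`Λ(I) G`. Dividing by `G` gives the conservation equation, and `Λ(I) < M(K)` because every
`G_k ≥ Φ(0) = 1`.
-/

open Finset Function

section Update

variable {I : Type*} [DecidableEq I]

theorem sum_update_sub_one_lt [Fintype I] {x : I → ℕ} {i : I} (hi : 0 < x i) :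
    ∑ j, update x i (x i - 1) j < ∑ j, x j := by
  refine sum_lt_sum (fun j _ => ?_) ⟨i, mem_univ i, by simp only [update_self]; omega⟩
  rcases eq_or_ne j i with rfl | h
  · simp only [update_self]; omega
  · rw [update_of_ne h]

theorem prod_pow_eq_mul_prod_pow_update [Fintype I] {R : Type*} [CommMonoid R] (lam : I → R)
    {x : I → ℕ} {i : I} (hi : 0 < x i) :
    ∏ j, lam j ^ x j = lam i * ∏ j, lam j ^ update x i (x i - 1) j := by
  rw [Fintype.prod_eq_mul_prod_compl i, Fintype.prod_eq_mul_prod_compl i, update_self, ← mul_assoc,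
    ← pow_succ', Nat.sub_add_cancel hi]
  congr 1
  exact prod_congr rfl fun j hj => by rw [update_of_ne (by simpa using hj)]

theorem hasSum_ite_pos_update_iff {α : Type*} [AddCommMonoid α] [TopologicalSpace α]
    (g : (I → ℕ) → α) (i : I) {a : α} :
    HasSum (fun x => if 0 < x i then g (update x i (x i - 1)) else 0) a ↔ HasSum g a := by
  set succ : (I → ℕ) → I → ℕ := fun y => update y i (y i + 1)
  have hsucc : Injective succ :=
    LeftInverse.injective (g := fun x => update x i (x i - 1)) fun y => by simp [succ]
  have hcomp : (fun x => if 0 < x i then g (update x i (x i - 1)) else 0) ∘ succ = g := by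
    ext y; simp [succ]
  have hvanish : ∀ x ∉ Set.range succ, (if 0 < x i then g (update x i (x i - 1)) else 0) = 0 := by
    intro x hx
    refine if_neg fun hi => hx ⟨update x i (x i - 1), ?_⟩
    simp [succ, Nat.sub_add_cancel hi]
  rw [← hsucc.hasSum_iff hvanish, hcomp]

end Update

section BalanceFunction

variable {I K : Type} [Fintype I] [DecidableEq K] (μ : K → ℝ)

def busyServers (Ka : I → Finset K) (x : I → ℕ) : Finset K :=
  (univ.filter fun i => 0 < x i).biUnion Ka

def idleSet (Ka : I → Finset K) (k : K) : Set (I → ℕ) :=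
  {x | ∀ i, k ∈ Ka i → x i = 0}

theorem notMem_idleSet_iff {Ka : I → Finset K} {k : K} {x : I → ℕ} :
    x ∉ idleSet Ka k ↔ k ∈ busyServers Ka x := by
  simp [idleSet, busyServers, Nat.pos_iff_ne_zero, and_comm]

theorem hasSum_mul_sum_busyServers [Fintype K] (Ka : I → Finset K) {f : (I → ℕ) → ℝ}
    {G : ℝ} {Gidle : K → ℝ} (hf : HasSum f G)
    (hidle : ∀ k, HasSum (fun x : idleSet Ka k => f x) (Gidle k)) :
    HasSum (fun x => f x * ∑ k ∈ busyServers Ka x, μ k) (∑ k, μ k * (G - Gidle k)) := by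
  have hbusy : ∀ k, HasSum ((idleSet Ka k)ᶜ.indicator f) (G - Gidle k) := fun k => by
    rw [Set.indicator_compl]
    exact hf.sub (hasSum_subtype_iff_indicator.1 (hidle k))
  refine (hasSum_sum fun k _ => (hbusy k).mul_left (μ k)).congr_fun fun x => ?_
  classical
  simp_rw [Set.indicator_apply, Set.mem_compl_iff, notMem_idleSet_iff, mul_ite, mul_zero]
  rw [sum_ite_mem, univ_inter, ← sum_mul, mul_comm]

variable [DecidableEq I] (Ka : I → Finset K)

theorem Phi_zero : Phi μ Ka 0 = 1 := by
  rw [Phi]; exact if_pos rfl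

theorem Phi_nonneg (hμ : ∀ k, 0 ≤ μ k) (x : I → ℕ) : 0 ≤ Phi μ Ka x := by
  rw [Phi]
  split_ifs
  · exact zero_le_one
  · exact div_nonneg (sum_nonneg fun i _ => Phi_nonneg hμ _) (sum_nonneg fun k _ => hμ k)
termination_by ∑ i, x i
decreasing_by exact sum_update_sub_one_lt (mem_filter.1 i.2).2

theorem Phi_mul_sum_busyServers (hμ : ∀ k, 0 < μ k) (hKa : ∀ i, (Ka i).Nonempty) (x : I → ℕ) :
    Phi μ Ka x * ∑ k ∈ busyServers Ka x, μ k =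
      ∑ i ∈ univ.filter (fun i => 0 < x i), Phi μ Ka (update x i (x i - 1)) := by
  by_cases hx : x = fun _ => 0
  · subst hx
    simp [busyServers]
  obtain ⟨i, hi⟩ := ne_iff.1 hx
  obtain ⟨k, hk⟩ := hKa i
  have hbusy : k ∈ busyServers Ka x := notMem_idleSet_iff.1 fun h => hi (h i hk)
  rw [Phi, if_neg hx, sum_attach _ fun i => Phi μ Ka (update x i (x i - 1))]
  exact div_mul_cancel₀ _ (sum_pos (fun k _ => hμ k) ⟨k, hbusy⟩).ne'

noncomputable def stationaryWeight (lam : I → ℝ) (x : I → ℕ) : ℝ :=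
  Phi μ Ka x * ∏ i, lam i ^ x i

theorem stationaryWeight_nonneg (hμ : ∀ k, 0 ≤ μ k) {lam : I → ℝ} (hlam : ∀ i, 0 ≤ lam i)
    (x : I → ℕ) : 0 ≤ stationaryWeight μ Ka lam x :=
  mul_nonneg (Phi_nonneg μ Ka hμ x) (prod_nonneg fun i _ => pow_nonneg (hlam i) _)

theorem stationaryWeight_zero (lam : I → ℝ) : stationaryWeight μ Ka lam 0 = 1 := by
  simp [stationaryWeight, Phi_zero]

theorem stationaryWeight_mul_sum_busyServers (hμ : ∀ k, 0 < μ k) (hKa : ∀ i, (Ka i).Nonempty)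
    (lam : I → ℝ) (x : I → ℕ) :
    stationaryWeight μ Ka lam x * ∑ k ∈ busyServers Ka x, μ k =
      ∑ i, if 0 < x i then lam i * stationaryWeight μ Ka lam (update x i (x i - 1)) else 0 := by
  rw [stationaryWeight, mul_right_comm, Phi_mul_sum_busyServers μ Ka hμ hKa, sum_mul, sum_filter]
  refine sum_congr rfl fun i _ => ?_
  split_ifs with hi
  · rw [stationaryWeight, prod_pow_eq_mul_prod_pow_update lam hi]
    ring
  · rfl

theorem sum_mul_tsum_idleSet_eq [Fintype K] (hμ : ∀ k, 0 < μ k) (hKa : ∀ i, (Ka i).Nonempty)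
    {lam : I → ℝ} (hG : Summable (stationaryWeight μ Ka lam)) :
    ∑ k, μ k * ∑' x : idleSet Ka k, stationaryWeight μ Ka lam x =
      ((∑ k, μ k) - ∑ i, lam i) * ∑' x, stationaryWeight μ Ka lam x := by
  set G := ∑' x, stationaryWeight μ Ka lam x
  have hbusy := hasSum_mul_sum_busyServers μ Ka hG.hasSum
    (Gidle := fun k => ∑' x : idleSet Ka k, stationaryWeight μ Ka lam x)
    fun k => (hG.subtype _).hasSum
  have hbalance : HasSum (fun x => stationaryWeight μ Ka lam x * ∑ k ∈ busyServers Ka x, μ k)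
      ((∑ i, lam i) * G) := by
    simp_rw [stationaryWeight_mul_sum_busyServers μ Ka hμ hKa, sum_mul]
    exact hasSum_sum fun i _ =>
      (hasSum_ite_pos_update_iff (fun y => lam i * stationaryWeight μ Ka lam y) i).2
        (hG.hasSum.mul_left (lam i))
  have hsum := hbusy.unique hbalance
  simp only [mul_sub, sum_sub_distrib, ← sum_mul] at hsum
  linarith

end BalanceFunction

theorem conservation_equation_general
    {I K : Type} [Fintype I] [DecidableEq I]
    [Fintype K] [DecidableEq K] [Nonempty K]
    (μ : K → ℝ) (hμ : ∀ k, 0 < μ k)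
    (Ka : I → Finset K) (hKa : ∀ i, (Ka i).Nonempty)
    (lam : I → ℝ) (hlam : ∀ i, 0 ≤ lam i)
    (hG : Summable (fun x : I → ℕ => Phi μ Ka x * ∏ i, lam i ^ x i)) :
    (∑ k, μ k *
        ((∑' x : I → ℕ, Phi μ Ka x * ∏ i, lam i ^ x i)⁻¹ *
          ∑' x : {x : I → ℕ // ∀ i, k ∈ Ka i → x i = 0},
            Phi μ Ka x.1 * ∏ i, lam i ^ x.1 i) =
      (∑ k, μ k) - ∑ i, lam i) ∧
    (∑ i, lam i) < ∑ k, μ k := by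
  change Summable (stationaryWeight μ Ka lam) at hG
  change ∑ k, μ k * ((∑' x, stationaryWeight μ Ka lam x)⁻¹ *
      ∑' x : idleSet Ka k, stationaryWeight μ Ka lam x) = _ ∧ _
  have hweight := stationaryWeight_nonneg μ Ka (fun k => (hμ k).le) hlam
  have hG_pos : 0 < ∑' x, stationaryWeight μ Ka lam x :=
    zero_lt_one.trans_le (stationaryWeight_zero μ Ka lam ▸ hG.le_tsum 0 fun x _ => hweight x)
  have hidle_pos : ∀ k, 0 < ∑' x : idleSet Ka k, stationaryWeight μ Ka lam x := fun k =>
    zero_lt_one.trans_le (stationaryWeight_zero μ Ka lam ▸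
      (hG.subtype _).le_tsum ⟨0, fun _ _ => rfl⟩ fun x _ => hweight x)
  have hcons := sum_mul_tsum_idleSet_eq μ Ka hμ hKa hG
  simp_rw [mul_left_comm _ (_⁻¹), ← mul_sum, hcons]
  refine ⟨by field_simp, ?_⟩
  have hprod_pos : 0 < ((∑ k, μ k) - ∑ i, lam i) * ∑' x, stationaryWeight μ Ka lam x :=
    hcons ▸ sum_pos (fun k _ => mul_pos (hμ k) (hidle_pos k)) univ_nonempty
  linarith [pos_of_mul_pos_left hprod_pos hG_pos.le]

/-- If `G(λ) < ∞`, the conservation equation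
`∑_{k∈K} μ_k ψ_k = M(K) − Λ(I)` holds, where `ψ_k` is the stationary probability that
server `k` is idle; in particular `Λ(I) < M(K)`. -/
theorem conservation_equation
    {I K : Type} [Fintype I] [DecidableEq I] [Nonempty I]
    [Fintype K] [DecidableEq K] [Nonempty K]
    (μ : K → ℝ) (hμ : ∀ k, 0 < μ k)
    (Ka : I → Finset K) (hKa : ∀ i, (Ka i).Nonempty) (hcov : ∀ k, ∃ i, k ∈ Ka i)
    (lam : I → ℝ) (hlam : ∀ i, 0 ≤ lam i)
    (hG : Summable (fun x : I → ℕ => Phi μ Ka x * ∏ i, lam i ^ x i)) :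
    (∑ k, μ k *
        ((∑' x : I → ℕ, Phi μ Ka x * ∏ i, lam i ^ x i)⁻¹ *
          ∑' x : {x : I → ℕ // ∀ i, k ∈ Ka i → x i = 0},
            Phi μ Ka x.1 * ∏ i, lam i ^ x.1 i) =
      (∑ k, μ k) - ∑ i, lam i) ∧
    (∑ i, lam i) < ∑ k, μ k :=
  conservation_equation_general μ hμ Ka hKa lam hlam hG
end
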